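/- For m ≥ 3, if G is a K_{1,m}-free graph of order n with minimum degree δ, then Γ_d(G) < 2(m−1)n·ln(δ + m − 1)/(δ + m − 1). -/

import Mathlib

/-- An orientation of a simple graph `G`: each edge gets exactly one direction. -/
structure GraphOrientation {V : Type*} (G : SimpleGraph V) where
  rel : V → V → Prop
  adj_of_rel : ∀ u v, rel u v → G.Adj u v
  rel_of_adj : ∀ u v, G.Adj u v → rel u v ∨ rel v u
  asymm : ∀ u v, rel u v → ¬ rel v u

/-- `S` is a directed dominating set for the digraph relation `D`. -/
def IsDirDomSet {V : Type*} (D : V → V → Prop) (S : Set V) : Prop :=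
  ∀ u, u ∉ S → ∃ v ∈ S, D v u

/-- The directed domination number of a digraph. -/
noncomputable def dirDomNum (V : Type*) [Fintype V] (D : V → V → Prop) : ℕ :=
  sInf {k | ∃ S : Finset V, IsDirDomSet D ↑S ∧ S.card = k}

/-- The directed domination number of a graph: max of `dirDomNum` over orientations. -/
noncomputable def GammaD {V : Type*} [Fintype V] (G : SimpleGraph V) : ℕ :=
  sSup {k | ∃ D : GraphOrientation G, dirDomNum V D.rel = k}

/-- `S` is an independent set of vertices in `G`. -/
def IsIndepFinset {V : Type*} (G : SimpleGraph V) (S : Finset V) : Prop :=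
  ∀ u ∈ S, ∀ v ∈ S, ¬ G.Adj u v

/-- The independence number of `G`. -/
noncomputable def alphaNum {V : Type*} [Fintype V] (G : SimpleGraph V) : ℕ :=
  sSup {k | ∃ S : Finset V, IsIndepFinset G S ∧ S.card = k}

/-- `G` contains no induced copy of the star `K_{1,m}`. -/
def K1mFree {V : Type*} (m : ℕ) (G : SimpleGraph V) : Prop :=
  ¬ ∃ (v : V) (s : Finset V), s.card = m ∧ v ∉ s ∧ (∀ u ∈ s, G.Adj v u) ∧
    ∀ u ∈ s, ∀ w ∈ s, ¬ G.Adj u w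

open Finset

open scoped Classical in
lemma caroWei {V : Type*} [Fintype V] (G : SimpleGraph V) :
    ∀ N : ℕ, ∀ U : Finset V, U.card ≤ N →
    ∃ I : Finset V, I ⊆ U ∧ IsIndepFinset G I ∧
      ∑ v ∈ U, (1 : ℝ) / ((U.filter (G.Adj v)).card + 1) ≤ I.card := by
  intro N
  induction N with
  | zero =>
    intro U hU
    refine ⟨∅, empty_subset _, by intro u hu; simp at hu, ?_⟩
    rw [Nat.le_zero, Finset.card_eq_zero] at hU
    simp [hU]
  | succ N ih =>
    intro U hU
    rcases U.eq_empty_or_nonempty with rfl | hne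
    · exact ⟨∅, empty_subset _, (by intro u hu; simp at hu), by simp⟩
    obtain ⟨v, hvU, hvmin⟩ := U.exists_min_image (fun w => (U.filter (G.Adj w)).card) hne
    set W : Finset V := U.filter (fun w => w = v ∨ G.Adj v w) with hW
    have hWU : W ⊆ U := filter_subset _ _
    have hvW : v ∈ W := mem_filter.2 ⟨hvU, Or.inl rfl⟩
    set U' : Finset V := U \ W with hU'
    have hU'U : U' ⊆ U := sdiff_subset
    have hcard' : U'.card ≤ N := by
      have h1 : U'.card < U.card := by
        apply card_lt_card
        constructor
        · exact hU'U
        · intro hsub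
          exact (mem_sdiff.1 (hsub hvU)).2 hvW
      omega
    obtain ⟨I', hI'U, hI'ind, hI'sum⟩ := ih U' hcard'
    have hvI' : v ∉ I' := fun h => (mem_sdiff.1 (hI'U h)).2 hvW
    refine ⟨insert v I', ?_, ?_, ?_⟩
    · intro x hx
      rcases mem_insert.1 hx with rfl | hx
      · exact hvU
      · exact hU'U (hI'U hx)
    · have hkey : ∀ y ∈ I', ¬ G.Adj v y := by
        intro y hy hadj
        have hyU' := hI'U hy
        exact (mem_sdiff.1 hyU').2 (mem_filter.2 ⟨(mem_sdiff.1 hyU').1, Or.inr hadj⟩)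
      intro x hx y hy
      rcases mem_insert.1 hx with hx | hx
      · rcases mem_insert.1 hy with hy | hy
        · rw [hx, hy]; exact G.loopless.irrefl v
        · rw [hx]; exact hkey y hy
      · rcases mem_insert.1 hy with hy | hy
        · rw [hy]; intro hadj; exact hkey x hx hadj.symm
        · exact hI'ind x hx y hy
    · -- sum bound
      have hsplit : ∑ w ∈ U, (1 : ℝ) / ((U.filter (G.Adj w)).card + 1)
          = ∑ w ∈ U', (1 : ℝ) / ((U.filter (G.Adj w)).card + 1)
            + ∑ w ∈ W, (1 : ℝ) / ((U.filter (G.Adj w)).card + 1) :=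
        (Finset.sum_sdiff hWU).symm
      have hWcard : W.card = (U.filter (G.Adj v)).card + 1 := by
        have : W = insert v (U.filter (G.Adj v)) := by
          ext x
          simp only [hW, mem_filter, mem_insert]
          constructor
          · rintro ⟨hxU, rfl | h⟩
            · exact Or.inl rfl
            · exact Or.inr ⟨hxU, h⟩
          · rintro (rfl | ⟨hxU, h⟩)
            · exact ⟨hvU, Or.inl rfl⟩
            · exact ⟨hxU, Or.inr h⟩
        rw [this, card_insert_of_notMem (by simp [G.loopless.irrefl v])]
      have hWsum : ∑ w ∈ W, (1 : ℝ) / ((U.filter (G.Adj w)).card + 1) ≤ 1 := by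
        have hbound : ∀ w ∈ W, (1 : ℝ) / ((U.filter (G.Adj w)).card + 1)
            ≤ 1 / ((U.filter (G.Adj v)).card + 1) := by
          intro w hw
          apply one_div_le_one_div_of_le
          · positivity
          · have := hvmin w (hWU hw)
            have h2 : ((U.filter (G.Adj v)).card : ℝ) ≤ (U.filter (G.Adj w)).card := by exact_mod_cast this
            linarith
        calc ∑ w ∈ W, (1 : ℝ) / ((U.filter (G.Adj w)).card + 1)
            ≤ ∑ _w ∈ W, (1 : ℝ) / ((U.filter (G.Adj v)).card + 1) := Finset.sum_le_sum hbound
          _ = W.card * (1 / ((U.filter (G.Adj v)).card + 1)) := by rw [Finset.sum_const, nsmul_eq_mul]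
          _ = 1 := by
              rw [hWcard]
              push_cast
              field_simp
      have hU'sum : ∑ w ∈ U', (1 : ℝ) / ((U.filter (G.Adj w)).card + 1)
          ≤ ∑ w ∈ U', (1 : ℝ) / ((U'.filter (G.Adj w)).card + 1) := by
        apply Finset.sum_le_sum
        intro w hw
        apply one_div_le_one_div_of_le
        · positivity
        · have : (U'.filter (G.Adj w)).card ≤ (U.filter (G.Adj w)).card :=
            card_le_card (filter_subset_filter _ hU'U)
          have h2 : ((U'.filter (G.Adj w)).card : ℝ) ≤ (U.filter (G.Adj w)).card := by exact_mod_cast this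
          linarith
      rw [hsplit, card_insert_of_notMem hvI']
      push_cast
      linarith

open scoped Classical in
lemma exists_high_outdeg {V : Type*} [Fintype V] (G : SimpleGraph V)
    (D : GraphOrientation G) (a : ℕ) (ha : 1 ≤ a)
    (hind : ∀ I : Finset V, IsIndepFinset G I → I.card ≤ a)
    (U : Finset V) (hne : U.Nonempty) :
    ∃ v ∈ U, ((U.card : ℝ) - a) / (2 * a) ≤ ((U.filter (fun w => D.rel v w)).card : ℝ) := by
  have hu0 : (0:ℝ) < U.card := by exact_mod_cast card_pos.2 hne
  have ha0 : (0:ℝ) < a := by exact_mod_cast ha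
  -- Caro-Wei gives sum of reciprocals ≤ a
  obtain ⟨I, hIU, hIind, hIsum⟩ := caroWei G U.card U le_rfl
  have hIa : (I.card : ℝ) ≤ a := by exact_mod_cast hind I hIind
  have hsum_le : ∑ v ∈ U, (1 : ℝ) / ((U.filter (G.Adj v)).card + 1) ≤ a := hIsum.trans hIa
  -- Cauchy-Schwarz
  set x : V → ℝ := fun v => ((U.filter (G.Adj v)).card : ℝ) + 1 with hx
  have hxpos : ∀ v, 0 < x v := by intro v; positivity
  have hCS : ((U.card : ℝ))^2 ≤ (∑ v ∈ U, x v) * ∑ v ∈ U, 1 / x v := by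
    have h := Finset.sum_mul_sq_le_sq_mul_sq U (fun v => Real.sqrt (x v))
      (fun v => 1 / Real.sqrt (x v))
    have h1 : ∀ v ∈ U, Real.sqrt (x v) * (1 / Real.sqrt (x v)) = 1 := by
      intro v _
      rw [mul_one_div, div_self (Real.sqrt_pos.2 (hxpos v)).ne']
    rw [Finset.sum_congr rfl h1] at h
    simp only [Finset.sum_const, nsmul_eq_mul, mul_one] at h
    have h2 : ∀ v ∈ U, Real.sqrt (x v) ^ 2 = x v := fun v _ => Real.sq_sqrt (hxpos v).le
    have h3 : ∀ v ∈ U, (1 / Real.sqrt (x v)) ^ 2 = 1 / x v := by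
      intro v _
      rw [div_pow, one_pow, Real.sq_sqrt (hxpos v).le]
    rw [Finset.sum_congr rfl h2, Finset.sum_congr rfl h3] at h
    exact h
  have hsum1pos : (0:ℝ) ≤ ∑ v ∈ U, 1 / x v := by
    apply Finset.sum_nonneg; intro v _; positivity
  have hxsum : (0:ℝ) < ∑ v ∈ U, x v := by
    apply Finset.sum_pos (fun v _ => hxpos v) hne
  have hkey : ((U.card : ℝ))^2 ≤ (∑ v ∈ U, x v) * a := by
    calc ((U.card : ℝ))^2 ≤ (∑ v ∈ U, x v) * ∑ v ∈ U, 1 / x v := hCS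
      _ ≤ (∑ v ∈ U, x v) * a := by
          apply mul_le_mul_of_nonneg_left _ hxsum.le
          exact hsum_le
  -- sum of degrees
  have hxsum_eq : ∑ v ∈ U, x v = (∑ v ∈ U, ((U.filter (G.Adj v)).card : ℝ)) + U.card := by
    rw [Finset.sum_add_distrib, Finset.sum_const, nsmul_eq_mul, mul_one]
  -- relate degrees to out-degrees
  have hdeg_le : ∀ v, ((U.filter (G.Adj v)).card : ℝ)
      ≤ ((U.filter (fun w => D.rel v w)).card : ℝ) + ((U.filter (fun w => D.rel w v)).card : ℝ) := by
    intro v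
    have hsub : U.filter (G.Adj v) ⊆ U.filter (fun w => D.rel v w) ∪ U.filter (fun w => D.rel w v) := by
      intro w hw
      rcases mem_filter.1 hw with ⟨hwU, hadj⟩
      rcases D.rel_of_adj v w hadj with h | h
      · exact mem_union_left _ (mem_filter.2 ⟨hwU, h⟩)
      · exact mem_union_right _ (mem_filter.2 ⟨hwU, h⟩)
    have := (card_le_card hsub).trans (card_union_le _ _)
    exact_mod_cast this
  have hswap : ∑ v ∈ U, ((U.filter (fun w => D.rel w v)).card : ℝ)
      = ∑ v ∈ U, ((U.filter (fun w => D.rel v w)).card : ℝ) := by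
    have e1 : ∀ (v : V), ((U.filter (fun w => D.rel w v)).card : ℝ) = ∑ w ∈ U, if D.rel w v then (1:ℝ) else 0 := by
      intro v
      rw [Finset.card_filter]
      push_cast
      rfl
    have e2 : ∀ (v : V), ((U.filter (fun w => D.rel v w)).card : ℝ) = ∑ w ∈ U, if D.rel v w then (1:ℝ) else 0 := by
      intro v
      rw [Finset.card_filter]
      push_cast
      rfl
    rw [Finset.sum_congr rfl (fun v _ => e1 v), Finset.sum_congr rfl (fun v _ => e2 v)]
    exact Finset.sum_comm
  have houtsum : (∑ v ∈ U, ((U.filter (G.Adj v)).card : ℝ))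
      ≤ 2 * ∑ v ∈ U, ((U.filter (fun w => D.rel v w)).card : ℝ) := by
    calc (∑ v ∈ U, ((U.filter (G.Adj v)).card : ℝ))
        ≤ ∑ v ∈ U, (((U.filter (fun w => D.rel v w)).card : ℝ) + ((U.filter (fun w => D.rel w v)).card : ℝ)) :=
          Finset.sum_le_sum (fun v _ => hdeg_le v)
      _ = 2 * ∑ v ∈ U, ((U.filter (fun w => D.rel v w)).card : ℝ) := by
          rw [Finset.sum_add_distrib, hswap]; ring
  -- average argument
  have havg : (U.card : ℝ) * (((U.card : ℝ) - a) / (2*a)) ≤ ∑ v ∈ U, ((U.filter (fun w => D.rel v w)).card : ℝ) := by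
    have hdegsum : ((U.card:ℝ))^2 / a - U.card ≤ ∑ v ∈ U, ((U.filter (G.Adj v)).card : ℝ) := by
      have := hkey
      rw [hxsum_eq] at this
      have h2 : ((U.card : ℝ))^2 / a ≤ (∑ v ∈ U, ((U.filter (G.Adj v)).card : ℝ)) + U.card := by
        rw [div_le_iff₀ ha0]
        linarith
      linarith
    have : (U.card : ℝ) * (((U.card : ℝ) - a) / (2*a)) = (((U.card:ℝ))^2 / a - U.card) / 2 := by
      field_simp
    rw [this]
    linarith
  by_contra hcon
  push_neg at hcon
  have : ∑ v ∈ U, ((U.filter (fun w => D.rel v w)).card : ℝ)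
      < ∑ _v ∈ U, (((U.card : ℝ) - a) / (2*a)) := by
    apply Finset.sum_lt_sum_of_nonempty hne
    intro v hv
    exact hcon v hv
  rw [Finset.sum_const, nsmul_eq_mul] at this
  linarith

noncomputable def Bnd (a u : ℕ) : ℝ :=
  if u ≤ a then (u : ℝ) else (a : ℝ) + 2 * a * Real.log (u / a)

open scoped Classical in
lemma greedy {V : Type*} [Fintype V] (G : SimpleGraph V)
    (D : GraphOrientation G) (a : ℕ) (ha : 1 ≤ a)
    (hind : ∀ I : Finset V, IsIndepFinset G I → I.card ≤ a) :
    ∀ N : ℕ, ∀ U : Finset V, U.card ≤ N →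
    ∃ S : Finset V, S ⊆ U ∧ (∀ u ∈ U, u ∈ S ∨ ∃ v ∈ S, D.rel v u) ∧
      (S.card : ℝ) ≤ Bnd a U.card := by
  intro N
  induction N with
  | zero =>
    intro U hU
    rw [Nat.le_zero, Finset.card_eq_zero] at hU
    subst hU
    exact ⟨∅, Subset.rfl, by simp, by simp [Bnd]⟩
  | succ N ih =>
    intro U hU
    by_cases hua : U.card ≤ a
    · refine ⟨U, Subset.rfl, fun u hu => Or.inl hu, ?_⟩
      rw [Bnd, if_pos hua]
    push_neg at hua
    have hne : U.Nonempty := card_pos.1 (by omega)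
    have ha0 : (0:ℝ) < a := by exact_mod_cast ha
    have hu0 : (0:ℝ) < U.card := by exact_mod_cast Nat.lt_of_lt_of_le (by omega) le_rfl
    obtain ⟨v, hvU, hvdeg⟩ := exists_high_outdeg G D a ha hind U hne
    set W : Finset V := insert v (U.filter (fun w => D.rel v w)) with hW
    have hWU : W ⊆ U := by
      intro x hx
      rcases mem_insert.1 hx with rfl | hx
      · exact hvU
      · exact (mem_filter.1 hx).1
    have hvnotfilter : v ∉ U.filter (fun w => D.rel v w) := by
      intro h
      exact G.loopless.irrefl v (D.adj_of_rel v v (mem_filter.1 h).2)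
    have hWcard : W.card = (U.filter (fun w => D.rel v w)).card + 1 :=
      card_insert_of_notMem hvnotfilter
    set U' : Finset V := U \ W with hU'
    have hU'card : U'.card = U.card - W.card := card_sdiff_of_subset hWU
    have hvW : v ∈ W := mem_insert_self _ _
    have hlt : U'.card < U.card := by
      have : 1 ≤ W.card := by rw [hWcard]; omega
      have hWle : W.card ≤ U.card := card_le_card hWU
      omega
    obtain ⟨S', hS'U', hS'dom, hS'card⟩ := ih U' (by omega)
    have hvS' : v ∉ S' := fun h => (mem_sdiff.1 (hS'U' h)).2 hvW
    refine ⟨insert v S', ?_, ?_, ?_⟩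
    · intro x hx
      rcases mem_insert.1 hx with rfl | hx
      · exact hvU
      · exact (sdiff_subset) (hS'U' hx)
    · intro u hu
      by_cases huU' : u ∈ U'
      · rcases hS'dom u huU' with h | ⟨w, hw, hrel⟩
        · exact Or.inl (mem_insert_of_mem h)
        · exact Or.inr ⟨w, mem_insert_of_mem hw, hrel⟩
      · have huW : u ∈ W := by
          by_contra h
          exact huU' (mem_sdiff.2 ⟨hu, h⟩)
        rcases mem_insert.1 huW with rfl | h
        · exact Or.inl (mem_insert_self _ _)
        · exact Or.inr ⟨v, mem_insert_self _ _, (mem_filter.1 h).2⟩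
    · -- cardinality
      rw [card_insert_of_notMem hvS']
      push_cast
      -- key real inequalities
      have hu'real : (U'.card : ℝ) ≤ (U.card : ℝ) - ((U.card : ℝ) - a) / (2*a) - 1 := by
        have h1 : (U'.card : ℝ) = (U.card : ℝ) - W.card := by
          rw [hU'card]
          have := card_le_card hWU
          push_cast [Nat.cast_sub this]
          ring
        have h2 : ((U.filter (fun w => D.rel v w)).card : ℝ) + 1 ≤ (W.card : ℝ) := by
          rw [hWcard]; push_cast; linarith
        linarith
      have hBndU : Bnd a U.card = (a:ℝ) + 2 * a * Real.log (U.card / a) := by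
        rw [Bnd, if_neg (by omega)]
      rw [hBndU]
      have hlog_nonneg : 0 ≤ Real.log ((U.card : ℝ) / a) := by
        apply Real.log_nonneg
        rw [le_div_iff₀ ha0]
        have : (a:ℝ) ≤ U.card := by exact_mod_cast hua.le
        linarith
      have hlogdiff : Real.log ((U.card:ℝ)/a) - Real.log ((U'.card:ℝ)/a)
          = Real.log ((U.card:ℝ)/(U'.card:ℝ)) ∨ U'.card = 0 := by
        rcases Nat.eq_zero_or_pos U'.card with h | h
        · exact Or.inr h
        · left
          have hu'0 : (0:ℝ) < U'.card := by exact_mod_cast h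
          rw [← Real.log_div (by positivity) (by positivity)]
          congr 1
          field_simp
      by_cases hu'a : U'.card ≤ a
      · -- S'.card ≤ U'.card ≤ a ; need a + 1 ≤ a + 2a log(u/a)
        have hS'le : (S'.card : ℝ) ≤ (U'.card : ℝ) := by
          rw [Bnd, if_pos hu'a] at hS'card
          exact hS'card
        have hU'a : (U'.card : ℝ) ≤ a := by exact_mod_cast hu'a
        have hlog : (1:ℝ) ≤ 2 * a * Real.log ((U.card:ℝ) / a) := by
          have hua1 : (a:ℝ) + 1 ≤ (U.card : ℝ) := by exact_mod_cast hua
          have h1 : Real.log ((a:ℝ)/(a+1)) ≤ (a:ℝ)/(a+1) - 1 :=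
            Real.log_le_sub_one_of_pos (by positivity)
          have h2 : Real.log (((a:ℝ)+1)/a) = - Real.log ((a:ℝ)/(a+1)) := by
            rw [← Real.log_inv]
            congr 1
            field_simp
          have h3 : Real.log (((a:ℝ)+1)/a) ≤ Real.log ((U.card:ℝ)/a) := by
            apply Real.log_le_log (by positivity)
            gcongr
          have h4 : (1:ℝ) - (a:ℝ)/(a+1) = 1/(a+1) := by field_simp; ring
          have h5 : (1:ℝ)/(a+1) ≤ Real.log ((U.card:ℝ)/a) := by
            rw [← h4]; rw [h2] at h3; linarith
          have ha1 : (1:ℝ) ≤ a := by exact_mod_cast ha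
          have h6 : (1:ℝ) ≤ 2*a/(a+1) := by
            rw [le_div_iff₀ (by positivity)]
            linarith
          calc (1:ℝ) ≤ 2*a/(a+1) := h6
            _ = 2*a * (1/(a+1)) := by ring
            _ ≤ 2*a * Real.log ((U.card:ℝ)/a) := by
                apply mul_le_mul_of_nonneg_left h5 (by positivity)
        linarith
      · -- a < U'.card
        push_neg at hu'a
        have hu'pos : (0:ℝ) < U'.card := by
          have : 0 < U'.card := by omega
          exact_mod_cast this
        rw [Bnd, if_neg (by omega)] at hS'card
        have hlogd : Real.log ((U.card:ℝ)/a) - Real.log ((U'.card:ℝ)/a)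
            = Real.log ((U.card:ℝ)/(U'.card:ℝ)) := by
          rcases hlogdiff with h | h
          · exact h
          · omega
        -- log(u/u') ≥ 1 - u'/u ≥ 1/(2a)
        have h1 : Real.log ((U'.card:ℝ)/(U.card:ℝ)) ≤ (U'.card:ℝ)/(U.card:ℝ) - 1 :=
          Real.log_le_sub_one_of_pos (by positivity)
        have h2 : Real.log ((U.card:ℝ)/(U'.card:ℝ)) = - Real.log ((U'.card:ℝ)/(U.card:ℝ)) := by
          rw [← Real.log_inv]
          congr 1
          field_simp
        have h3 : (1:ℝ) - (U'.card:ℝ)/(U.card:ℝ) ≤ Real.log ((U.card:ℝ)/(U'.card:ℝ)) := by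
          rw [h2]; linarith
        have h4 : (U'.card:ℝ)/(U.card:ℝ) ≤ 1 - 1/(2*a) := by
          rw [div_le_iff₀ hu0]
          have expand : (1 - 1/(2*(a:ℝ))) * (U.card:ℝ) = (U.card:ℝ) - (U.card:ℝ)/(2*a) := by
            field_simp
          rw [expand]
          have heq : (U.card:ℝ)/(2*a) - 1/2 = ((U.card : ℝ) - a) / (2*a) := by
            field_simp
          linarith
        have h5 : (1:ℝ)/(2*a) ≤ Real.log ((U.card:ℝ)/(U'.card:ℝ)) := by
          have : (1:ℝ)/(2*a) ≤ 1 - (U'.card:ℝ)/(U.card:ℝ) := by linarith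
          linarith
        have h6 : (1:ℝ) ≤ 2*a*Real.log ((U.card:ℝ)/(U'.card:ℝ)) := by
          calc (1:ℝ) = 2*a*(1/(2*a)) := by field_simp
            _ ≤ 2*a*Real.log ((U.card:ℝ)/(U'.card:ℝ)) := by
                apply mul_le_mul_of_nonneg_left h5 (by positivity)
        have h7 : 2*(a:ℝ)*Real.log ((U'.card:ℝ)/a) + 1 ≤ 2*a*Real.log ((U.card:ℝ)/a) := by
          have : 2*(a:ℝ)*Real.log ((U.card:ℝ)/a) - 2*a*Real.log ((U'.card:ℝ)/a)
              = 2*a*Real.log ((U.card:ℝ)/(U'.card:ℝ)) := by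
            rw [← hlogd]; ring
          linarith
        linarith

section
variable {V : Type*} [Fintype V] (G : SimpleGraph V)

lemma alpha_bdd : BddAbove {k | ∃ S : Finset V, IsIndepFinset G S ∧ S.card = k} := by
  refine ⟨Fintype.card V, ?_⟩
  rintro k ⟨S, _, rfl⟩
  exact S.card_le_univ

lemma indep_card_le_alpha {S : Finset V} (h : IsIndepFinset G S) : S.card ≤ alphaNum G :=
  le_csSup (alpha_bdd G) ⟨S, h, rfl⟩

lemma one_le_alpha [Nonempty V] : 1 ≤ alphaNum G := by
  have h : IsIndepFinset G {Classical.arbitrary V} := by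
    intro u hu v hv
    simp only [mem_singleton] at hu hv
    subst hu; subst hv
    exact G.loopless.irrefl _
  simpa using indep_card_le_alpha G h

lemma alpha_le_card : alphaNum G ≤ Fintype.card V := by
  apply csSup_le ⟨0, Set.mem_setOf.2 ⟨∅, (by intro u hu; simp at hu), by simp⟩⟩
  rintro k ⟨S, _, rfl⟩
  exact S.card_le_univ

lemma alpha_mem : ∃ S : Finset V, IsIndepFinset G S ∧ S.card = alphaNum G := by
  have hne : {k | ∃ S : Finset V, IsIndepFinset G S ∧ S.card = k}.Nonempty :=
    ⟨0, Set.mem_setOf.2 ⟨∅, (by intro u hu; simp at hu), by simp⟩⟩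
  exact Nat.sSup_mem hne (alpha_bdd G)

variable [DecidableRel G.Adj]

lemma indep_bound {m : ℕ} (hm : 3 ≤ m) (hfree : K1mFree m G) :
    alphaNum G * (G.minDegree + (m - 1)) ≤ (m - 1) * Fintype.card V := by
  classical
  obtain ⟨S, hSind, hScard⟩ := alpha_mem G
  set a := alphaNum G
  set n := Fintype.card V
  set T : Finset V := Finset.univ \ S with hT
  -- each vertex of S has all its neighbors in T
  have hdeg : ∀ v ∈ S, G.degree v = (T.filter (G.Adj v)).card := by
    intro v hv
    rw [← SimpleGraph.card_neighborFinset_eq_degree]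
    congr 1
    ext w
    simp only [SimpleGraph.mem_neighborFinset, mem_filter, hT, mem_sdiff, mem_univ, true_and]
    constructor
    · intro h
      refine ⟨?_, h⟩
      intro hwS
      exact hSind v hv w hwS h
    · exact fun h => h.2
  -- double counting
  have hdouble : ∑ v ∈ S, ((T.filter (G.Adj v)).card)
      = ∑ w ∈ T, ((S.filter (G.Adj w)).card) := by
    simp only [Finset.card_filter]
    rw [Finset.sum_comm]
    apply Finset.sum_congr rfl
    intro w _
    apply Finset.sum_congr rfl
    intro v _
    by_cases h : G.Adj v w
    · rw [if_pos h, if_pos h.symm]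
    · rw [if_neg h, if_neg (fun h' => h h'.symm)]
  have hTbound : ∀ w ∈ T, (S.filter (G.Adj w)).card ≤ m - 1 := by
    intro w hw
    by_contra hc
    push_neg at hc
    have hmle : m ≤ (S.filter (G.Adj w)).card := by omega
    obtain ⟨t, htsub, htcard⟩ := Finset.exists_subset_card_eq hmle
    apply hfree
    refine ⟨w, t, htcard, ?_, ?_, ?_⟩
    · intro hwt
      have := (mem_filter.1 (htsub hwt)).1
      rw [hT, mem_sdiff] at hw
      exact hw.2 this
    · intro u hu
      exact ((mem_filter.1 (htsub hu)).2)
    · intro u hu w' hw'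
      exact hSind u (mem_filter.1 (htsub hu)).1 w' (mem_filter.1 (htsub hw')).1
  have hsum_ub : ∑ v ∈ S, ((T.filter (G.Adj v)).card) ≤ (m - 1) * (n - a) := by
    rw [hdouble]
    calc ∑ w ∈ T, ((S.filter (G.Adj w)).card) ≤ ∑ _w ∈ T, (m-1) :=
        Finset.sum_le_sum hTbound
      _ = T.card * (m-1) := by rw [Finset.sum_const, smul_eq_mul]
      _ = (m-1) * (n - a) := by
          rw [hT, card_sdiff_of_subset (subset_univ S), card_univ, hScard, mul_comm]
  have hsum_lb : a * G.minDegree ≤ ∑ v ∈ S, ((T.filter (G.Adj v)).card) := by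
    calc a * G.minDegree = ∑ _v ∈ S, G.minDegree := by
          rw [Finset.sum_const, smul_eq_mul, hScard]
      _ ≤ ∑ v ∈ S, G.degree v := Finset.sum_le_sum (fun v _ => G.minDegree_le_degree v)
      _ = ∑ v ∈ S, ((T.filter (G.Adj v)).card) := Finset.sum_congr rfl hdeg
  have han : a ≤ n := by rw [← hScard]; exact S.card_le_univ
  have := hsum_lb.trans hsum_ub
  -- a * δ ≤ (m-1)(n-a)  ⟹  a(δ + m - 1) ≤ (m-1) n
  have expand : (m-1) * n = (m-1)*(n-a) + (m-1)*a := by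
    rw [← Nat.mul_add]
    congr 1
    omega
  calc a * (G.minDegree + (m-1)) = a * G.minDegree + a * (m-1) := by ring
    _ ≤ (m-1)*(n-a) + (m-1)*a := by
        have : a * (m-1) = (m-1) * a := by ring
        omega
    _ = (m-1) * n := expand.symm
end

lemma exp_half_lt_two : Real.exp (1/2) < 2 := by
  have h : Real.exp (1/2) ^ 2 < 2 ^ 2 := by
    rw [← Real.exp_nat_mul]
    norm_num
    calc Real.exp 1 < 2.7182818286 := Real.exp_one_lt_d9
      _ < 4 := by norm_num
  exact lt_of_pow_lt_pow_left₀ 2 (by norm_num) h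

lemma half_lt_log_two : (1:ℝ)/2 < Real.log 2 := by
  rw [show (1:ℝ)/2 = Real.log (Real.exp (1/2)) by rw [Real.log_exp]]
  exact Real.log_lt_log (Real.exp_pos _) exp_half_lt_two

lemma one_le_log_three : (1:ℝ) ≤ Real.log 3 := by
  rw [Real.le_log_iff_exp_le (by norm_num)]
  exact Real.exp_one_lt_d9.le.trans (by norm_num)

set_option maxHeartbeats 1000000 in
lemma final_arith (a n K M : ℕ) (ha : 1 ≤ a) (han : a ≤ n) (hM : 2 ≤ M) (hK : M ≤ K)
    (hbound : a * K ≤ M * n) (Γ : ℝ) (hΓn : Γ ≤ (n:ℝ))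
    (hΓB : a < n → Γ ≤ (a:ℝ) + 2*(a:ℝ)*Real.log ((n:ℝ)/(a:ℝ))) :
    Γ < 2*(M:ℝ)*(n:ℝ)*Real.log (K:ℝ) / (K:ℝ) := by
  have ha0 : (0:ℝ) < a := by exact_mod_cast ha
  have hn0 : (0:ℝ) < n := by exact_mod_cast (ha.trans han)
  have hM2 : (2:ℝ) ≤ M := by exact_mod_cast hM
  have hK2 : (2:ℝ) ≤ K := by exact_mod_cast hM.trans hK
  have hK0 : (0:ℝ) < K := by linarith
  have hM0 : (0:ℝ) < M := by linarith
  have hMK : (M:ℝ) ≤ K := by exact_mod_cast hK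
  have hlogK : Real.log 2 ≤ Real.log K := Real.log_le_log (by norm_num) hK2
  have hlogM : Real.log 2 ≤ Real.log M := Real.log_le_log (by norm_num) hM2
  have hlogKpos : (1:ℝ)/2 < Real.log K := lt_of_lt_of_le half_lt_log_two hlogK
  obtain ⟨c, hc⟩ : ∃ c : ℝ, c = (M:ℝ)*(n:ℝ)/(K:ℝ) := ⟨_, rfl⟩
  have hc0 : 0 < c := by rw [hc]; positivity
  have hrhs : 2*(M:ℝ)*(n:ℝ)*Real.log (K:ℝ) / (K:ℝ) = 2*c*Real.log K := by
    rw [hc]; ring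
  have hca : (a:ℝ) ≤ c := by
    rw [hc, le_div_iff₀ hK0]
    exact_mod_cast hbound
  have hcn : c ≤ (n:ℝ) := by
    rw [hc, div_le_iff₀ hK0]
    have : (M:ℝ)*(n:ℝ) ≤ (K:ℝ)*(n:ℝ) := by
      apply mul_le_mul_of_nonneg_right hMK hn0.le
    linarith
  have hKMnc : (K:ℝ) = (M:ℝ) * ((n:ℝ)/c) := by
    rw [hc]; field_simp
  have hnc1 : (1:ℝ) ≤ (n:ℝ)/c := by
    rw [le_div_iff₀ hc0]; linarith
  have hlogsplit : Real.log (K:ℝ) = Real.log (M:ℝ) + Real.log ((n:ℝ)/c) := by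
    rw [hKMnc]
    exact Real.log_mul (by positivity) (by positivity)
  have hlognc : 0 ≤ Real.log ((n:ℝ)/c) := Real.log_nonneg hnc1
  rw [hrhs]
  rcases le_or_gt n a with hna | hna
  · -- a = n, K = M, c = n
    have heq : a = n := le_antisymm han hna
    subst heq
    have hKM : K = M := by
      have h1 : a * K ≤ a * M := by linarith [hbound, Nat.mul_comm M a]
      have : K ≤ M := Nat.le_of_mul_le_mul_left h1 (by omega)
      omega
    have hcne : c = (a:ℝ) := by rw [hc, hKM]; field_simp
    rw [hcne]
    have hstep : (a:ℝ) < 2*(a:ℝ)*Real.log K := by nlinarith [hlogKpos, hn0]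
    linarith
  · -- a < n
    by_cases hhalf : (1:ℝ)/2 ≤ Real.log ((n:ℝ)/c)
    · have hΓ := hΓB hna
      -- monotonicity : a + 2a log(n/a) ≤ c + 2c log(n/c)
      have hsplit2 : Real.log ((n:ℝ)/(a:ℝ)) = Real.log ((n:ℝ)/c) + Real.log (c/(a:ℝ)) := by
        rw [← Real.log_mul (by positivity) (by positivity)]
        congr 1
        field_simp
      have hlogca : Real.log (c/(a:ℝ)) ≤ c/(a:ℝ) - 1 := Real.log_le_sub_one_of_pos (by positivity)
      have h2a : 2*(a:ℝ)*(c/(a:ℝ) - 1) = 2*(c - a) := by field_simp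
      have hmono : (a:ℝ) + 2*(a:ℝ)*Real.log ((n:ℝ)/(a:ℝ)) ≤ c + 2*c*Real.log ((n:ℝ)/c) := by
        rw [hsplit2]
        have key : 2*(a:ℝ)*Real.log (c/(a:ℝ)) ≤ (c - a) + 2*(c - a)*Real.log ((n:ℝ)/c) := by
          have h1 : 2*(a:ℝ)*Real.log (c/(a:ℝ)) ≤ 2*(c-a) := by
            calc 2*(a:ℝ)*Real.log (c/(a:ℝ)) ≤ 2*(a:ℝ)*(c/(a:ℝ)-1) := by
                  apply mul_le_mul_of_nonneg_left hlogca (by positivity)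
              _ = 2*(c-a) := h2a
          have h2 : (c-a) ≤ 2*(c-a)*Real.log ((n:ℝ)/c) := by
            calc (c-a) = 2*(c-a)*(1/2) := by ring
              _ ≤ 2*(c-a)*Real.log ((n:ℝ)/c) := by
                  apply mul_le_mul_of_nonneg_left hhalf (by linarith)
          linarith
        have e1 : (a:ℝ) + 2*(a:ℝ)*(Real.log ((n:ℝ)/c) + Real.log (c/(a:ℝ)))
            = (a:ℝ) + 2*(a:ℝ)*Real.log ((n:ℝ)/c) + 2*(a:ℝ)*Real.log (c/(a:ℝ)) := by ring
        have e2 : (c - (a:ℝ)) + 2*(c - (a:ℝ))*Real.log ((n:ℝ)/c)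
            = c - a + 2*c*Real.log ((n:ℝ)/c) - 2*(a:ℝ)*Real.log ((n:ℝ)/c) := by ring
        linarith [key]
      -- c + 2c log(n/c) < 2c log K
      have hfin : c + 2*c*Real.log ((n:ℝ)/c) < 2*c*Real.log (K:ℝ) := by
        rw [hlogsplit]
        have hlogM2 : (1:ℝ)/2 < Real.log M := half_lt_log_two.trans_le hlogM
        have hcc : c < 2*c*Real.log (M:ℝ) := by nlinarith
        have e3 : 2*c*(Real.log (M:ℝ) + Real.log ((n:ℝ)/c))
            = 2*c*Real.log (M:ℝ) + 2*c*Real.log ((n:ℝ)/c) := by ring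
        linarith
      linarith
    · -- log(n/c) < 1/2 : n < c exp(1/2)
      push_neg at hhalf
      have hnc : (n:ℝ)/c < Real.exp (1/2) := by
        calc (n:ℝ)/c = Real.exp (Real.log ((n:ℝ)/c)) := (Real.exp_log (by positivity)).symm
          _ < Real.exp (1/2) := Real.exp_lt_exp.2 hhalf
      have hnlt : (n:ℝ) < c * Real.exp (1/2) := by
        have h := (div_lt_iff₀ hc0).1 hnc
        linarith
      rcases Nat.lt_or_ge K 3 with hK3 | hK3
      · -- K = 2, M = 2, c = n
        have hKe : K = 2 := by omega
        have hMe : M = 2 := by omega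
        have hcne : c = (n:ℝ) := by rw [hc, hKe, hMe]; push_cast; ring
        rw [hcne, hKe]
        push_cast
        have hstep : (n:ℝ) < 2*(n:ℝ)*Real.log 2 := by nlinarith [half_lt_log_two, hn0]
        linarith
      · -- K ≥ 3 : exp(1/2) < 2 ≤ 2 log K
        have hlog3 : (1:ℝ) ≤ Real.log K := by
          calc (1:ℝ) ≤ Real.log 3 := one_le_log_three
            _ ≤ Real.log K := Real.log_le_log (by norm_num) (by exact_mod_cast hK3)
        have : c * Real.exp (1/2) < c * 2 := by
          apply mul_lt_mul_of_pos_left exp_half_lt_two hc0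
        have h2 : c * 2 ≤ 2*c*Real.log K := by nlinarith [hlog3, hc0]
        linarith

section
variable {V : Type*} [Fintype V]

lemma dirDomNum_le (D : V → V → Prop) (S : Finset V) (h : IsDirDomSet D ↑S) :
    dirDomNum V D ≤ S.card :=
  Nat.sInf_le ⟨S, h, rfl⟩

lemma dirDomNum_le_card (D : V → V → Prop) : dirDomNum V D ≤ Fintype.card V := by
  have h : IsDirDomSet D ↑(univ : Finset V) := fun u hu =>
    absurd (Finset.mem_coe.2 (mem_univ u)) hu
  exact (dirDomNum_le D univ h).trans_eq (card_univ)

lemma gammaD_le_card (G : SimpleGraph V) : GammaD G ≤ Fintype.card V := by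
  apply csSup_le'
  rintro k ⟨D, rfl⟩
  exact dirDomNum_le_card D.rel

lemma gammaD_attained (G : SimpleGraph V) :
    GammaD G = 0 ∨ ∃ D : GraphOrientation G, dirDomNum V D.rel = GammaD G := by
  rcases Set.eq_empty_or_nonempty {k | ∃ D : GraphOrientation G, dirDomNum V D.rel = k}
    with h | h
  · left
    simp only [GammaD, h, csSup_empty]
    rfl
  · right
    exact Nat.sSup_mem h ⟨Fintype.card V, by rintro k ⟨D, rfl⟩; exact dirDomNum_le_card D.rel⟩
end

/-- For `m ≥ 3`, if `G` is a `K_{1,m}`-free graph of order `n` with minimum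
degree `δ`, then `Γ_d(G) < 2(m−1)n ln(δ + m − 1)/(δ + m − 1)`. -/
theorem stmt_12 {V : Type*} [Fintype V] [Nonempty V] (G : SimpleGraph V)
    [DecidableRel G.Adj] (m : ℕ) (hm : 3 ≤ m) (hfree : K1mFree m G) :
    (GammaD G : ℝ) <
      2 * ((m : ℝ) - 1) * (Fintype.card V : ℝ) *
        Real.log ((G.minDegree : ℝ) + m - 1) / ((G.minDegree : ℝ) + m - 1) := by
  classical
  have hm1 : (1:ℕ) ≤ m := by omega
  have hcastK : ((G.minDegree : ℝ) + m - 1) = ((G.minDegree + (m - 1) : ℕ) : ℝ) := by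
    push_cast [Nat.cast_sub hm1]
    ring
  have hcastM : ((m : ℝ) - 1) = (((m - 1 : ℕ)) : ℝ) := by
    push_cast [Nat.cast_sub hm1]
    ring
  rw [hcastK, hcastM]
  have ha := one_le_alpha G
  have han := alpha_le_card G
  have key := final_arith (alphaNum G) (Fintype.card V) (G.minDegree + (m-1)) (m-1)
    ha han (by omega) (by omega) (indep_bound G hm hfree) (GammaD G : ℝ)
    (by exact_mod_cast gammaD_le_card G) ?_
  · calc (GammaD G : ℝ)
        < 2*((m-1:ℕ):ℝ)*(Fintype.card V:ℝ)*Real.log ((G.minDegree + (m-1) :ℕ):ℝ)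
            / ((G.minDegree + (m-1):ℕ):ℝ) := key
      _ = 2 * (((m - 1 : ℕ)) : ℝ) * (Fintype.card V : ℝ) *
          Real.log (((G.minDegree + (m - 1) : ℕ)) : ℝ) / (((G.minDegree + (m - 1) : ℕ)) : ℝ) := by
          ring
  · intro hlt
    have halog : 0 ≤ Real.log ((Fintype.card V : ℝ)/(alphaNum G : ℝ)) := by
      apply Real.log_nonneg
      rw [le_div_iff₀ (by exact_mod_cast ha : (0:ℝ) < (alphaNum G : ℝ))]
      have : (alphaNum G : ℝ) ≤ (Fintype.card V : ℝ) := by exact_mod_cast han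
      linarith
    rcases gammaD_attained G with h0 | ⟨D, hD⟩
    · rw [h0]
      push_cast
      positivity
    · rw [← hD]
      obtain ⟨S, hSU, hSdom, hScard⟩ := greedy G D (alphaNum G) ha
        (fun I hI => indep_card_le_alpha G hI) (Fintype.card V) univ (by rw [card_univ])
      have hdom : IsDirDomSet D.rel ↑S := by
        intro u hu
        rcases hSdom u (mem_univ u) with h | h
        · exact absurd (Finset.mem_coe.2 h) hu
        · exact h
      have h1 : dirDomNum V D.rel ≤ S.card := dirDomNum_le D.rel S hdom
      have h2 : (S.card : ℝ) ≤ Bnd (alphaNum G) (Fintype.card V) := by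
        rwa [card_univ] at hScard
      have h3 : Bnd (alphaNum G) (Fintype.card V)
          = (alphaNum G : ℝ) + 2*(alphaNum G:ℝ)*Real.log ((Fintype.card V:ℝ)/(alphaNum G:ℝ)) := by
        rw [Bnd, if_neg (by omega)]
      calc (dirDomNum V D.rel : ℝ) ≤ (S.card : ℝ) := by exact_mod_cast h1
        _ ≤ _ := h2.trans_eq h3
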